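/- For every compact interval [q_1,q_2]⊂(0,∞) there exists n_0∈ℕ such that for all n≥n_0 and all q∈[q_1,q_2] there exists a unique H^q_n=(h^q_{n,0},h^q_{n,1})∈𝒟_n solving ∇[(1/n)L_{Λ_n}](H^q_n) = (q,0), i.e. (1/n)∑_{i=1}^n (1−i/n)·L'((1−i/n)h^q_{n,0}+h^q_{n,1}) = q and (1/n)∑_{i=1}^n L'((1−i/n)h^q_{n,0}+h^q_{n,1}) = 0. -/

import Mathlib

open Filter MeasureTheory
open scoped BigOperators Classical

noncomputable section

/-- `c_β = (1+e^{-β/2})/(1-e^{-β/2})`. -/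
def cbeta (β : ℝ) : ℝ := (1 + Real.exp (-β / 2)) / (1 - Real.exp (-β / 2))

/-- law of a single increment: `P_β(v = k) = e^{-(β/2)|k|}/c_β`. -/
def pstep (β : ℝ) (k : ℤ) : ℝ := Real.exp (-(β / 2) * |(k : ℝ)|) / cbeta β

/-- weight (probability) of a finite path of increments. -/
def pathWeight (β : ℝ) {n : ℕ} (v : Fin n → ℤ) : ℝ := ∏ i, pstep β (v i)

/-- position of the walk after `i` steps, `V_i = v_1 + ⋯ + v_i`. -/
def walkAt {n : ℕ} (v : Fin n → ℤ) (i : ℕ) : ℤ :=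
  ∑ j ∈ Finset.univ.filter (fun j : Fin n => (j : ℕ) < i), v j

/-- geometric area `A_n = ∑_{i=1}^n |V_i|`. -/
def areaOf {n : ℕ} (v : Fin n → ℤ) : ℤ := ∑ i ∈ Finset.range n, |walkAt v (i + 1)|

/-- `x ∧̃ y`. -/
def twedge (x y : ℤ) : ℤ := if x * y < 0 then min |x| |y| else 0

/-- extend a configuration `l ∈ ℤ^N` (0-indexed) by `0` beyond `N`. -/
def extendConf {N : ℕ} (l : Fin N → ℤ) : ℕ → ℤ := fun i => if h : i < N then l ⟨i, h⟩ else 0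

/-- Hamiltonian `H_{L,β}(l) = β ∑_{n=1}^{N-1} l_n ∧̃ l_{n+1}` (0-indexed `g`). -/
def HamEn (β : ℝ) (N : ℕ) (g : ℕ → ℤ) : ℝ :=
  β * ∑ n ∈ Finset.range (N - 1), ((twedge (g n) (g (n + 1)) : ℤ) : ℝ)

/-- restricted partition function: sum of `e^{H_{L,β}(l)}` over `l ∈ Ω_L` satisfying `Q`. -/
def Zres (β : ℝ) (L : ℕ) (Q : ℕ → (ℕ → ℤ) → Prop) : ℝ :=
  ∑ N ∈ Finset.Icc 1 L, ∑' l : Fin N → ℤ,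
    if (∑ i ∈ Finset.range N, (extendConf l i).natAbs) + N = L ∧ Q N (extendConf l)
    then Real.exp (HamEn β N (extendConf l)) else 0

/-- uniform-model partition function `Z_{L,β}`. -/
def Zuni (β : ℝ) (L : ℕ) : ℝ := Zres β L (fun _ _ => True)

/-- polymer measure of the event `Q`. -/
def polP (β : ℝ) (L : ℕ) (Q : ℕ → (ℕ → ℤ) → Prop) : ℝ := Zres β L Q / Zuni β L

/-- set of bead-breakpoints of a configuration (`1`-indexed positions `i ∈ [1,N]`
with `l_i ∧̃ l_{i+1} = 0`, convention `l_{N+1}=0`). -/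
def breakSet (N : ℕ) (g : ℕ → ℤ) : Finset ℕ :=
  (Finset.Icc 1 N).filter (fun i => twedge (g (i - 1)) (g i) = 0)

/-- cumulated length `u_j = |l_1|+⋯+|l_j|+j`. -/
def uLen (g : ℕ → ℤ) (j : ℕ) : ℕ := (∑ k ∈ Finset.range j, (g k).natAbs) + j

/-- previous breakpoint before `b` (or `0`). -/
def prevBreak (N : ℕ) (g : ℕ → ℤ) (b : ℕ) : ℕ :=
  ((breakSet N g).filter (fun a => a < b)).sup id

/-- size `|I_{j_max}|` of the largest bead. -/
def maxBead (N : ℕ) (g : ℕ → ℤ) : ℕ :=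
  (breakSet N g).sup (fun b => uLen g b - uLen g (prevBreak N g b))

/-- single-bead (one-bead) configurations : `l_i ∧̃ l_{i+1} ≠ 0` for `1 ≤ i ≤ N-1`. -/
def oneBead (N : ℕ) (g : ℕ → ℤ) : Prop :=
  ∀ i ∈ Finset.Icc 1 (N - 1), twedge (g (i - 1)) (g i) ≠ 0

/-- one-bead partition function `Z^o_{L,β}`. -/
def Zone (β : ℝ) (L : ℕ) : ℝ := Zres β L oneBead

/-- `E_β(e^{-δ A_N} 1_{V_N = 0})`. -/
def EA0 (β δ : ℝ) (N : ℕ) : ℝ :=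
  ∑' v : Fin N → ℤ, pathWeight β v * Real.exp (-δ * (areaOf v : ℝ)) *
    (if walkAt v N = 0 then 1 else 0)

/-- `E_β(e^{-δ A_N})`. -/
def EAfree (β δ : ℝ) (N : ℕ) : ℝ :=
  ∑' v : Fin N → ℤ, pathWeight β v * Real.exp (-δ * (areaOf v : ℝ))

/-- `h_β(δ) := sup_N (1/N) log E_β(e^{-δA_N} 1_{V_N=0})`. -/
def hbeta (β δ : ℝ) : ℝ := ⨆ n : ℕ, Real.log (EA0 β δ (n + 1)) / (n + 1)

/-- `n Y_n = V_0 + V_1 + ⋯ + V_{n-1}`. -/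
def ysum {n : ℕ} (v : Fin n → ℤ) : ℤ := ∑ i ∈ Finset.range n, walkAt v i

/-- probability of an event for the first `n` steps of the walk. -/
def prob0 (β : ℝ) (n : ℕ) (E : (Fin n → ℤ) → Prop) : ℝ :=
  ∑' v : Fin n → ℤ, pathWeight β v * (if E v then 1 else 0)

/-- log-mgf `L(h) = log E_β(e^{h v_1})`. -/
def Lmgf (β : ℝ) (h : ℝ) : ℝ := Real.log (∑' k : ℤ, Real.exp (h * k) * pstep β k)

/-- domain `𝒟`. -/
def Dom (β : ℝ) : Set (ℝ × ℝ) := {p | |p.2| < β / 2 ∧ |p.1 + p.2| < β / 2}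

/-- compact domain `K_η`. -/
def Keta (β η : ℝ) : Set (ℝ × ℝ) :=
  {p | p.2 ∈ Set.Icc (-β / 2 + η) (β / 2 - η) ∧ p.1 + p.2 ∈ Set.Icc (-β / 2 + η) (β / 2 - η)}

/-- `L_Λ(H) = ∫_0^1 L(x h_0 + h_1) dx`. -/
def LA (β : ℝ) (p : ℝ × ℝ) : ℝ := ∫ x in (0:ℝ)..1, Lmgf β (x * p.1 + p.2)

/-- `∇L_Λ`. -/
def gradLA (β : ℝ) (p : ℝ × ℝ) : ℝ × ℝ :=
  (∫ x in (0:ℝ)..1, x * deriv (Lmgf β) (x * p.1 + p.2),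
   ∫ x in (0:ℝ)..1, deriv (Lmgf β) (x * p.1 + p.2))

/-- `L_{Λ_n}(H) = ∑_{i=1}^n L((1-i/n)h_0 + h_1)`. -/
def LAn (β : ℝ) (n : ℕ) (p : ℝ × ℝ) : ℝ :=
  ∑ i ∈ Finset.Icc 1 n, Lmgf β ((1 - (i : ℝ) / n) * p.1 + p.2)

/-- domain `𝒟_n`. -/
def Dn (β : ℝ) (n : ℕ) : Set (ℝ × ℝ) :=
  {p | |p.2| < β / 2 ∧ |(1 - 1 / (n : ℝ)) * p.1 + p.2| < β / 2}

/-- tilted probability `P_{n,H}(E)`. -/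
def tiltProb (β : ℝ) (n : ℕ) (H : ℝ × ℝ) (E : (Fin n → ℤ) → Prop) : ℝ :=
  ∑' v : Fin n → ℤ, pathWeight β v *
    Real.exp (H.1 * ((ysum v : ℝ) / n) + H.2 * (walkAt v n : ℝ) - LAn β n H) *
    (if E v then 1 else 0)

/-- covariance matrix `B(H) = Hess L_Λ(H)`. -/
def Bmat (β : ℝ) (p : ℝ × ℝ) : Matrix (Fin 2) (Fin 2) ℝ :=
  !![∫ x in (0:ℝ)..1, x ^ 2 * deriv (deriv (Lmgf β)) (x * p.1 + p.2),
     ∫ x in (0:ℝ)..1, x * deriv (deriv (Lmgf β)) (x * p.1 + p.2);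
     ∫ x in (0:ℝ)..1, x * deriv (deriv (Lmgf β)) (x * p.1 + p.2),
     ∫ x in (0:ℝ)..1, deriv (deriv (Lmgf β)) (x * p.1 + p.2)]

/-- centered Gaussian density with covariance `B(H)`. -/
def gaussDen (β : ℝ) (p : ℝ × ℝ) (X : Fin 2 → ℝ) : ℝ :=
  (2 * Real.pi * Real.sqrt (Bmat β p).det)⁻¹ *
    Real.exp (-(1 / 2) * dotProduct ((Bmat β p)⁻¹.mulVec X) X)

/-- `G̃(a)`. -/
def Gtil (β : ℝ) (Ht : ℝ × ℝ → ℝ × ℝ) (a : ℝ) : ℝ :=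
  a * Real.log (cbeta β * Real.exp (-β)) - (1 / a) * (Ht (1 / a ^ 2, 0)).1
    + a * LA β (Ht (1 / a ^ 2, 0))

/-- partial sums of stretches `S_i = l_1 + ⋯ + l_i`. -/
def psum (g : ℕ → ℤ) (i : ℕ) : ℤ := ∑ k ∈ Finset.range i, g k

/-- upper envelope `ℰ⁺_{l,i}`. -/
def envUp (N : ℕ) (g : ℕ → ℤ) (i : ℕ) : ℤ :=
  if i = 0 then 0 else if i ≤ N then max (psum g (i - 1)) (psum g i) else psum g N

/-- lower envelope `ℰ⁻_{l,i}`. -/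
def envLo (N : ℕ) (g : ℕ → ℤ) (i : ℕ) : ℤ :=
  if i = 0 then 0 else if i ≤ N then min (psum g (i - 1)) (psum g i) else psum g N

/-- rescaled upper envelope `ℰ̃⁺_l(t)`. -/
def envUpR (N : ℕ) (g : ℕ → ℤ) (t : ℝ) : ℝ := (envUp N g ⌊t * (N + 1)⌋₊ : ℝ) / (N + 1)

/-- rescaled lower envelope `ℰ̃⁻_l(t)`. -/
def envLoR (N : ℕ) (g : ℕ → ℤ) (t : ℝ) : ℝ := (envLo N g ⌊t * (N + 1)⌋₊ : ℝ) / (N + 1)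

/-- the Wulff shape `γ*`. -/
def gammaStar (β : ℝ) (Ht : ℝ × ℝ → ℝ × ℝ) (ab : ℝ) (s : ℝ) : ℝ :=
  ∫ x in (0:ℝ)..s, deriv (Lmgf β) ((1 / 2 - x) * (Ht (1 / ab ^ 2, 0)).1)

/-- standard Brownian motion. -/
def IsStdBrownianMotion {Ω : Type*} [MeasurableSpace Ω] (P : Measure Ω)
    (B : ℝ → Ω → ℝ) : Prop :=
  (∀ ω, B 0 ω = 0) ∧
  (∀ᵐ ω ∂P, Continuous fun t => B t ω) ∧
  (∀ t, Measurable (B t)) ∧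
  (∀ s t : ℝ, 0 ≤ s → s ≤ t →
    P.map (fun ω => B t ω - B s ω) = ProbabilityTheory.gaussianReal 0 (Real.toNNReal (t - s))) ∧
  (∀ (n : ℕ) (t : Fin (n + 1) → ℝ), Monotone t → 0 ≤ t 0 →
    ProbabilityTheory.iIndepFun
      (fun i : Fin n => fun ω => B (t i.succ) ω - B (t i.castSucc) ω) P)

end

noncomputable section
def Cc (β : ℝ) : ℝ := Real.log (1 - Real.exp (-β)) - Real.log (cbeta β)
def Lc (β x : ℝ) : ℝ :=
  Cc β - Real.log (1 - Real.exp (x - β / 2)) - Real.log (1 - Real.exp (-x - β / 2))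
def phi (β x : ℝ) : ℝ :=
  Real.exp (x - β / 2) / (1 - Real.exp (x - β / 2))
    - Real.exp (-x - β / 2) / (1 - Real.exp (-x - β / 2))
end

lemma cbeta_pos {β : ℝ} (hβ : 0 < β) : 0 < cbeta β := by
  have h1 : Real.exp (-β / 2) < 1 := by
    rw [Real.exp_lt_one_iff]; linarith
  have h0 : 0 < Real.exp (-β / 2) := Real.exp_pos _
  exact div_pos (by linarith) (by linarith)

set_option maxHeartbeats 1000000 in
lemma hasSum_step {β x : ℝ} (hβ : 0 < β) (hx : |x| < β / 2) :
    HasSum (fun k : ℤ => Real.exp (x * k) * pstep β k)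
      (((1 - Real.exp (x - β / 2))⁻¹
        + Real.exp (-x - β / 2) * (1 - Real.exp (-x - β / 2))⁻¹) / cbeta β) := by
  rw [abs_lt] at hx
  have ha1 : Real.exp (x - β / 2) < 1 := by rw [Real.exp_lt_one_iff]; linarith
  have hb1 : Real.exp (-x - β / 2) < 1 := by rw [Real.exp_lt_one_iff]; linarith
  set f : ℤ → ℝ := fun k => Real.exp (x * k) * pstep β k with hf
  have h1 : HasSum (fun n : ℕ => f (n : ℤ)) ((1 - Real.exp (x - β / 2))⁻¹ / cbeta β) := by
    refine ((hasSum_geometric_of_lt_one (Real.exp_pos _).le ha1).div_const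
      (cbeta β)).congr_fun fun n => ?_
    simp only [hf, pstep]
    push_cast
    rw [abs_of_nonneg (by positivity : (0:ℝ) ≤ (n:ℝ))]
    rw [div_eq_mul_inv, div_eq_mul_inv, ← Real.exp_nat_mul, ← mul_assoc, ← Real.exp_add]
    ring_nf
  have h2 : HasSum (fun n : ℕ => f (-((n : ℤ) + 1)))
      (Real.exp (-x - β / 2) * (1 - Real.exp (-x - β / 2))⁻¹ / cbeta β) := by
    refine (((hasSum_geometric_of_lt_one (Real.exp_pos _).le hb1).mul_left
      (Real.exp (-x - β / 2))).div_const (cbeta β)).congr_fun fun n => ?_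
    simp only [hf, pstep]
    push_cast
    rw [abs_of_nonpos (by push_cast; linarith : (-((n:ℝ) + 1)) ≤ 0)]
    rw [div_eq_mul_inv, div_eq_mul_inv, ← pow_succ', ← Real.exp_nat_mul, ← mul_assoc,
      ← Real.exp_add]
    push_cast
    ring_nf
  have h3 := HasSum.of_nat_of_neg_add_one (f := f) h1 h2
  rw [← add_div] at h3
  exact h3

lemma one_sub_exp_pos_of_neg {y : ℝ} (hy : y < 0) : 0 < 1 - Real.exp y := by
  have := Real.exp_lt_one_iff.mpr hy; linarith

lemma exp_mul_exp_eq {β x : ℝ} :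
    Real.exp (x - β / 2) * Real.exp (-x - β / 2) = Real.exp (-β) := by
  rw [← Real.exp_add]; ring_nf

lemma Lmgf_eq {β x : ℝ} (hβ : 0 < β) (hx : |x| < β / 2) : Lmgf β x = Lc β x := by
  have hx' := abs_lt.mp hx
  have ha : 0 < 1 - Real.exp (x - β / 2) := one_sub_exp_pos_of_neg (by linarith)
  have hb : 0 < 1 - Real.exp (-x - β / 2) := one_sub_exp_pos_of_neg (by linarith)
  have hc : 0 < cbeta β := cbeta_pos hβ
  have hβ' : 0 < 1 - Real.exp (-β) := one_sub_exp_pos_of_neg (by linarith)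
  have hS : (1 - Real.exp (x - β / 2))⁻¹
        + Real.exp (-x - β / 2) * (1 - Real.exp (-x - β / 2))⁻¹
      = (1 - Real.exp (-β)) / ((1 - Real.exp (x - β / 2)) * (1 - Real.exp (-x - β / 2))) := by
    rw [← exp_mul_exp_eq (β := β) (x := x)]
    have alg : ∀ A B : ℝ, 1 - A ≠ 0 → 1 - B ≠ 0 →
        (1-A)⁻¹ + B*(1-B)⁻¹ = (1 - A*B)/((1-A)*(1-B)) := by
      intros A B hA hB; field_simp; ring
    exact alg _ _ ha.ne' hb.ne' 
  rw [Lmgf, (hasSum_step hβ hx).tsum_eq, hS, Lc, Cc]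
  rw [div_div, Real.log_div hβ'.ne' (by positivity), Real.log_mul (by positivity) hc.ne',
    Real.log_mul ha.ne' hb.ne']
  ring

lemma hasDerivAt_Lc {β x : ℝ} (hx : |x| < β / 2) : HasDerivAt (Lc β) (phi β x) x := by
  have hx' := abs_lt.mp hx
  have ha : 0 < 1 - Real.exp (x - β / 2) := one_sub_exp_pos_of_neg (by linarith)
  have hb : 0 < 1 - Real.exp (-x - β / 2) := one_sub_exp_pos_of_neg (by linarith)
  have hu : HasDerivAt (fun y : ℝ => 1 - Real.exp (y - β / 2)) (-Real.exp (x - β / 2)) x := by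
    have := ((Real.hasDerivAt_exp (x - β / 2)).comp x ((hasDerivAt_id x).sub_const (β / 2)))
    simpa using (hasDerivAt_const x (1:ℝ)).fun_sub this
  have hv : HasDerivAt (fun y : ℝ => 1 - Real.exp (-y - β / 2)) (Real.exp (-x - β / 2)) x := by
    have hin : HasDerivAt (fun y : ℝ => -y - β / 2) (-1) x :=
      ((hasDerivAt_id x).neg).sub_const (β / 2)
    have := (Real.hasDerivAt_exp (-x - β / 2)).comp x hin
    simpa using (hasDerivAt_const x (1:ℝ)).fun_sub this
  have hlu : HasDerivAt (fun y : ℝ => Real.log (1 - Real.exp (y - β / 2)))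
      ((1 - Real.exp (x - β / 2))⁻¹ * (-Real.exp (x - β / 2))) x :=
    by have h := (Real.hasDerivAt_log ha.ne').comp x hu; exact h
  have hlv : HasDerivAt (fun y : ℝ => Real.log (1 - Real.exp (-y - β / 2)))
      ((1 - Real.exp (-x - β / 2))⁻¹ * Real.exp (-x - β / 2)) x :=
    by have h := (Real.hasDerivAt_log hb.ne').comp x hv; exact h
  have := ((hasDerivAt_const x (Cc β)).sub hlu).sub hlv
  have heq : 0 - (1 - Real.exp (x - β / 2))⁻¹ * (-Real.exp (x - β / 2))
      - (1 - Real.exp (-x - β / 2))⁻¹ * Real.exp (-x - β / 2) = phi β x := by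
    rw [phi]; field_simp; ring
  rw [heq] at this
  exact this

lemma Dom_open {β : ℝ} : IsOpen {x : ℝ | |x| < β / 2} := by
  have : {x : ℝ | |x| < β / 2} = Metric.ball 0 (β / 2) := by
    ext x; simp [Metric.mem_ball, Real.dist_eq]
  rw [this]; exact Metric.isOpen_ball

lemma deriv_Lmgf {β x : ℝ} (hβ : 0 < β) (hx : |x| < β / 2) :
    deriv (Lmgf β) x = phi β x := by
  have hev : Lmgf β =ᶠ[nhds x] Lc β :=
    Filter.eventually_of_mem (Dom_open.mem_nhds hx) (fun y hy => Lmgf_eq hβ hy)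
  rw [hev.deriv_eq]
  exact (hasDerivAt_Lc hx).deriv

lemma frac_lt {A B : ℝ} (hA : 0 < A) (hAB : A < B) (hB : B < 1) :
    A / (1 - A) < B / (1 - B) := by
  rw [div_lt_div_iff₀ (by linarith) (by linarith)]
  nlinarith

lemma phi_lt {β x y : ℝ} (hx : |x| < β / 2) (hy : |y| < β / 2) (hxy : x < y) :
    phi β x < phi β y := by
  have hx' := abs_lt.mp hx
  have hy' := abs_lt.mp hy
  have h1 : Real.exp (x - β / 2) / (1 - Real.exp (x - β / 2))
      < Real.exp (y - β / 2) / (1 - Real.exp (y - β / 2)) :=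
    frac_lt (Real.exp_pos _) (Real.exp_lt_exp.mpr (by linarith))
      (Real.exp_lt_one_iff.mpr (by linarith))
  have h2 : Real.exp (-y - β / 2) / (1 - Real.exp (-y - β / 2))
      < Real.exp (-x - β / 2) / (1 - Real.exp (-x - β / 2)) :=
    frac_lt (Real.exp_pos _) (Real.exp_lt_exp.mpr (by linarith))
      (Real.exp_lt_one_iff.mpr (by linarith))
  rw [phi, phi]; linarith

lemma Lc_lower {β x : ℝ} (hx : |x| < β / 2) : Cc β ≤ Lc β x := by
  have hx' := abs_lt.mp hx
  have ha : 0 < 1 - Real.exp (x - β / 2) := one_sub_exp_pos_of_neg (by linarith)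
  have hb : 0 < 1 - Real.exp (-x - β / 2) := one_sub_exp_pos_of_neg (by linarith)
  have h1 : Real.log (1 - Real.exp (x - β / 2)) ≤ 0 :=
    Real.log_nonpos ha.le (by have := Real.exp_pos (x - β / 2); linarith)
  have h2 : Real.log (1 - Real.exp (-x - β / 2)) ≤ 0 :=
    Real.log_nonpos hb.le (by have := Real.exp_pos (-x - β / 2); linarith)
  rw [Lc]; linarith

lemma Lc_zero {β : ℝ} (hβ : 0 < β) : Lc β 0 = 0 := by
  have h1 : Real.exp (-β / 2) < 1 := Real.exp_lt_one_iff.mpr (by linarith)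
  have h0 : 0 < Real.exp (-β / 2) := Real.exp_pos _
  have hβexp : Real.exp (-β) = Real.exp (-β / 2) * Real.exp (-β / 2) := by
    rw [← Real.exp_add]; ring_nf
  have hfac : 1 - Real.exp (-β)
      = (1 - Real.exp (-β / 2)) * (1 + Real.exp (-β / 2)) := by rw [hβexp]; ring
  rw [Lc, Cc, cbeta, hfac]
  rw [Real.log_mul (by linarith) (by linarith), Real.log_div (by linarith) (by linarith)]
  have : (0:ℝ) - β / 2 = -β / 2 := by ring
  rw [this]
  have : -(0:ℝ) - β / 2 = -β / 2 := by ring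
  rw [this]
  ring

lemma Lc_even {β x : ℝ} : Lc β (-x) = Lc β x := by
  rw [Lc, Lc, neg_neg]
  ring_nf

lemma Lc_tendsto {β : ℝ} (hβ : 0 < β) :
    Tendsto (Lc β) (nhdsWithin (β / 2) (Set.Iio (β / 2))) atTop := by
  have h1 : Tendsto (fun x : ℝ => 1 - Real.exp (x - β / 2))
      (nhdsWithin (β / 2) (Set.Iio (β / 2))) (nhdsWithin 0 (Set.Ioi 0)) := by
    rw [tendsto_nhdsWithin_iff]
    constructor
    · have hcont : Tendsto (fun x : ℝ => 1 - Real.exp (x - β / 2)) (nhds (β / 2))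
          (nhds (1 - Real.exp (β / 2 - β / 2))) :=
        (Continuous.tendsto (by continuity) _)
      simpa using hcont.mono_left nhdsWithin_le_nhds
    · filter_upwards [self_mem_nhdsWithin] with x hx
      exact Set.mem_Ioi.mpr (one_sub_exp_pos_of_neg (by have : x < β / 2 := hx; linarith))
  have h2 : Tendsto (fun x : ℝ => -Real.log (1 - Real.exp (x - β / 2)))
      (nhdsWithin (β / 2) (Set.Iio (β / 2))) atTop := by
    rw [← tendsto_neg_atBot_iff]
    simpa [Function.comp_def] using Real.tendsto_log_nhdsGT_zero.comp h1
  have h3 : Tendsto (fun x : ℝ => Cc β - Real.log (1 - Real.exp (-x - β / 2)))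
      (nhdsWithin (β / 2) (Set.Iio (β / 2))) (nhds (Cc β - Real.log (1 - Real.exp (-β)))) := by
    have hne : 1 - Real.exp (-(β / 2) - β / 2) ≠ 0 :=
      (one_sub_exp_pos_of_neg (by linarith)).ne'
    have : ContinuousAt (fun x : ℝ => Cc β - Real.log (1 - Real.exp (-x - β / 2))) (β / 2) := by
      apply ContinuousAt.sub continuousAt_const
      have hinner : ContinuousAt (fun x : ℝ => 1 - Real.exp (-x - β / 2)) (β / 2) := by
        fun_prop
      exact ContinuousAt.comp (g := Real.log)
        (f := fun x : ℝ => 1 - Real.exp (-x - β / 2)) (Real.continuousAt_log hne) hinner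
    have h4 := this.tendsto.mono_left (nhdsWithin_le_nhds (s := Set.Iio (β / 2)))
    have harg : -(β / 2) - β / 2 = -β := by ring
    rwa [harg] at h4
  have := h3.add_atTop h2
  refine this.congr fun x => ?_
  rw [Lc]; ring

lemma exists_rho {β : ℝ} (hβ : 0 < β) (M : ℝ) :
    ∃ ρ : ℝ, 0 < ρ ∧ ρ < β / 2 ∧ M ≤ Lc β ρ := by
  have h1 : ∀ᶠ x in nhdsWithin (β / 2) (Set.Iio (β / 2)), M ≤ Lc β x :=
    (Lc_tendsto hβ).eventually_ge_atTop M
  have h2 : ∀ᶠ x in nhdsWithin (β / 2) (Set.Iio (β / 2)), 0 < x := by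
    have : Set.Ioi (0:ℝ) ∈ nhdsWithin (β / 2) (Set.Iio (β / 2)) :=
      nhdsWithin_le_nhds (isOpen_Ioi.mem_nhds (by simpa using half_pos hβ))
    filter_upwards [this] with x hx using hx
  have h3 : ∀ᶠ x in nhdsWithin (β / 2) (Set.Iio (β / 2)), x < β / 2 :=
    eventually_mem_nhdsWithin
  obtain ⟨x, hx1, hx2, hx3⟩ := (h1.and (h2.and h3)).exists
  exact ⟨x, hx2, hx3, hx1⟩

lemma absle {n : ℕ} (hn : 2 ≤ n) {p : ℝ × ℝ} {M : ℝ}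
    (h2 : |p.2| ≤ M) (h1 : |(1 - 1 / (n : ℝ)) * p.1 + p.2| ≤ M)
    {i : ℕ} (hi : i ∈ Finset.Icc 1 n) :
    |(1 - (i : ℝ) / n) * p.1 + p.2| ≤ M := by
  obtain ⟨hi1, hi2⟩ := Finset.mem_Icc.mp hi
  have hnpos : (0:ℝ) < n := by positivity
  set t₁ : ℝ := 1 - 1 / (n : ℝ) with ht₁
  have ht₁pos : 0 < t₁ := by
    rw [ht₁, sub_pos, div_lt_one hnpos]
    exact_mod_cast lt_of_lt_of_le one_lt_two hn
  set t : ℝ := 1 - (i : ℝ) / n with ht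
  have htnonneg : 0 ≤ t := by
    rw [ht, sub_nonneg, div_le_one hnpos]; exact_mod_cast hi2
  have htle : t ≤ t₁ := by
    rw [ht, ht₁]
    have h1i : (1:ℝ) ≤ (i:ℝ) := by exact_mod_cast hi1
    gcongr
  set lam : ℝ := t / t₁ with hlam
  have hlam0 : 0 ≤ lam := div_nonneg htnonneg ht₁pos.le
  have hlam1 : lam ≤ 1 := by rw [hlam, div_le_one ht₁pos]; exact htle
  have hdecomp : t * p.1 + p.2 = lam * (t₁ * p.1 + p.2) + (1 - lam) * p.2 := by
    rw [hlam]; field_simp; ring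
  calc |t * p.1 + p.2| = |lam * (t₁ * p.1 + p.2) + (1 - lam) * p.2| := by rw [hdecomp]
    _ ≤ lam * |t₁ * p.1 + p.2| + (1 - lam) * |p.2| := by
        refine (abs_add_le _ _).trans ?_
        rw [abs_mul, abs_mul, abs_of_nonneg hlam0, abs_of_nonneg (sub_nonneg.mpr hlam1)]
    _ ≤ lam * M + (1 - lam) * M := by
        have hM : 0 ≤ M := le_trans (abs_nonneg _) h2
        exact add_le_add (mul_le_mul_of_nonneg_left h1 hlam0)
          (mul_le_mul_of_nonneg_left h2 (by linarith))
    _ = M := by ring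

lemma uniq_sol {β : ℝ} {n : ℕ} (hn : 2 ≤ n) {p p' : ℝ × ℝ}
    (hp : ∀ i ∈ Finset.Icc 1 n, |(1 - (i:ℝ)/n) * p.1 + p.2| < β / 2)
    (hp' : ∀ i ∈ Finset.Icc 1 n, |(1 - (i:ℝ)/n) * p'.1 + p'.2| < β / 2)
    (e0 : ∑ i ∈ Finset.Icc 1 n, (1 - (i:ℝ)/n) * phi β ((1 - (i:ℝ)/n) * p.1 + p.2)
        = ∑ i ∈ Finset.Icc 1 n, (1 - (i:ℝ)/n) * phi β ((1 - (i:ℝ)/n) * p'.1 + p'.2))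
    (e1 : ∑ i ∈ Finset.Icc 1 n, phi β ((1 - (i:ℝ)/n) * p.1 + p.2)
        = ∑ i ∈ Finset.Icc 1 n, phi β ((1 - (i:ℝ)/n) * p'.1 + p'.2)) :
    p = p' := by
  have hnpos : (0:ℝ) < n := by positivity
  set x : ℕ → ℝ := fun i => (1 - (i:ℝ)/n) * p.1 + p.2 with hx
  set y : ℕ → ℝ := fun i => (1 - (i:ℝ)/n) * p'.1 + p'.2 with hy
  set g : ℕ → ℝ := fun i => (phi β (x i) - phi β (y i)) * (x i - y i) with hg
  have hsum : ∑ i ∈ Finset.Icc 1 n, g i = 0 := by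
    have hgi : ∀ i ∈ Finset.Icc 1 n, g i
        = (p.1 - p'.1) * ((1 - (i:ℝ)/n) * phi β (x i) - (1 - (i:ℝ)/n) * phi β (y i))
          + (p.2 - p'.2) * (phi β (x i) - phi β (y i)) := by
      intro i _
      rw [hg, hx, hy]; ring
    rw [Finset.sum_congr rfl hgi, Finset.sum_add_distrib, ← Finset.mul_sum, ← Finset.mul_sum,
      Finset.sum_sub_distrib, Finset.sum_sub_distrib, e0, e1]
    ring
  have hnonneg : ∀ i ∈ Finset.Icc 1 n, 0 ≤ g i := by
    intro i hi
    have hgid : g i = (phi β (x i) - phi β (y i)) * (x i - y i) := rfl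
    rcases lt_trichotomy (x i) (y i) with h | h | h
    · have h1 : phi β (x i) < phi β (y i) := phi_lt (hp i hi) (hp' i hi) h
      rw [hgid]; nlinarith
    · rw [hgid, h]; simp
    · have h1 : phi β (y i) < phi β (x i) := phi_lt (hp' i hi) (hp i hi) h
      rw [hgid]; nlinarith
  have hzero := (Finset.sum_eq_zero_iff_of_nonneg hnonneg).mp hsum
  have hxy : ∀ i ∈ Finset.Icc 1 n, x i = y i := by
    intro i hi
    by_contra hne
    have hgz : (phi β (x i) - phi β (y i)) * (x i - y i) = 0 := hzero i hi
    rcases lt_or_gt_of_ne hne with h | h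
    · have h1 : phi β (x i) < phi β (y i) := phi_lt (hp i hi) (hp' i hi) h
      nlinarith
    · have h1 : phi β (y i) < phi β (x i) := phi_lt (hp' i hi) (hp i hi) h
      nlinarith
  have hmemn : n ∈ Finset.Icc 1 n := Finset.mem_Icc.mpr ⟨by omega, le_refl n⟩
  have hmem1 : 1 ∈ Finset.Icc 1 n := Finset.mem_Icc.mpr ⟨le_refl 1, by omega⟩
  have h2 : p.2 = p'.2 := by
    have := hxy n hmemn
    rw [hx, hy] at this
    simp only [div_self hnpos.ne'] at this
    simpa using this
  have h1 : p.1 = p'.1 := by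
    have := hxy 1 hmem1
    rw [hx, hy] at this
    have ht₁pos : 0 < 1 - 1 / (n:ℝ) := by
      rw [sub_pos, div_lt_one hnpos]
      exact_mod_cast lt_of_lt_of_le one_lt_two hn
    push_cast at this
    rw [h2] at this
    have := add_right_cancel this
    exact mul_left_cancel₀ ht₁pos.ne' this
  exact Prod.ext h1 h2

lemma abslt {β : ℝ} {n : ℕ} (hn : 2 ≤ n) {p : ℝ × ℝ}
    (h2 : |p.2| < β / 2) (h1 : |(1 - 1 / (n : ℝ)) * p.1 + p.2| < β / 2)
    {i : ℕ} (hi : i ∈ Finset.Icc 1 n) :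
    |(1 - (i : ℝ) / n) * p.1 + p.2| < β / 2 :=
  lt_of_le_of_lt
    (absle hn (le_max_left _ _) (le_max_right _ _) hi)
    (max_lt h2 h1)

lemma Lc_abs {β y : ℝ} : Lc β |y| = Lc β y := by
  rcases abs_cases y with ⟨h, _⟩ | ⟨h, _⟩
  · rw [h]
  · rw [h, Lc_even]

set_option maxHeartbeats 2000000 in
lemma exists_sol {β : ℝ} (hβ : 0 < β) {n : ℕ} (hn : 2 ≤ n) {q q₂ : ℝ}
    (hq0 : 0 < q) (hq2 : q ≤ q₂) :
    ∃ p : ℝ × ℝ, (|p.2| < β / 2 ∧ |(1 - 1 / (n : ℝ)) * p.1 + p.2| < β / 2) ∧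
      (∑ i ∈ Finset.Icc 1 n, (1 - (i:ℝ)/n) * phi β ((1 - (i:ℝ)/n) * p.1 + p.2)) = n * q ∧
      (∑ i ∈ Finset.Icc 1 n, phi β ((1 - (i:ℝ)/n) * p.1 + p.2)) = 0 := by
  have hnpos : (0:ℝ) < n := by positivity
  set t₁ : ℝ := 1 - 1 / (n : ℝ) with ht₁
  have ht₁half : (1:ℝ)/2 ≤ t₁ := by
    rw [ht₁]
    have h2n : (2:ℝ) ≤ n := by exact_mod_cast hn
    have h1 : 1 / (n:ℝ) ≤ 1/2 := by
      apply div_le_div_of_nonneg_left <;> linarith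
    linarith
  have ht₁pos : 0 < t₁ := lt_of_lt_of_le (by norm_num) ht₁half
  set M : ℝ := 1 + n * |Cc β| + 2 * n * q₂ * β with hM
  obtain ⟨ρ, hρ0, hρβ, hρM⟩ := exists_rho hβ M
  set K : Set (ℝ × ℝ) := {p | |p.2| ≤ ρ ∧ |t₁ * p.1 + p.2| ≤ ρ} with hK
  set F : ℝ × ℝ → ℝ :=
    fun p => (∑ i ∈ Finset.Icc 1 n, Lc β ((1 - (i:ℝ)/n) * p.1 + p.2)) - n * q * p.1 with hF
  have habs : ∀ p ∈ K, ∀ i ∈ Finset.Icc 1 n, |(1 - (i:ℝ)/n) * p.1 + p.2| ≤ ρ := by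
    intro p hp i hi
    exact absle hn hp.1 hp.2 hi
  have habsβ : ∀ p ∈ K, ∀ i ∈ Finset.Icc 1 n, |(1 - (i:ℝ)/n) * p.1 + p.2| < β / 2 := by
    intro p hp i hi
    exact lt_of_le_of_lt (habs p hp i hi) hρβ
  have hp1bound : ∀ p ∈ K, |p.1| ≤ 4 * ρ := by
    intro p hp
    have h1 : |t₁ * p.1| ≤ 2 * ρ := by
      have he : t₁ * p.1 = (t₁ * p.1 + p.2) - p.2 := by ring
      rw [he]
      calc |(t₁ * p.1 + p.2) - p.2| ≤ |t₁ * p.1 + p.2| + |p.2| := abs_sub _ _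
        _ ≤ 2 * ρ := by have := hp.1; have := hp.2; linarith
    rw [abs_mul, abs_of_pos ht₁pos] at h1
    have h2 := mul_le_mul_of_nonneg_right ht₁half (abs_nonneg p.1)
    have h3 : 1/2 * |p.1| ≤ 2 * ρ := le_trans h2 h1
    linarith only [h3]
  have hKc : IsCompact K := by
    apply Metric.isCompact_of_isClosed_isBounded
    · have h1 : IsClosed {p : ℝ × ℝ | |p.2| ≤ ρ} :=
        isClosed_le (by fun_prop) continuous_const
      have h2 : IsClosed {p : ℝ × ℝ | |t₁ * p.1 + p.2| ≤ ρ} :=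
        isClosed_le (by fun_prop) continuous_const
      exact h1.inter h2
    · apply Bornology.IsBounded.subset (Metric.isBounded_closedBall
        (x := (0 : ℝ × ℝ)) (r := 4 * ρ))
      intro p hp
      rw [Metric.mem_closedBall, dist_zero_right, Prod.norm_def]
      apply max_le
      · rw [Real.norm_eq_abs]; exact hp1bound p hp
      · rw [Real.norm_eq_abs]; have := hp.1; linarith
  have h00K : (0,0) ∈ K := by constructor <;> simp [hρ0.le]
  have hKne : K.Nonempty := ⟨(0,0), h00K⟩
  have hFcont : ContinuousOn F K := by
    apply ContinuousOn.sub
    · apply continuousOn_finset_sum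
      intro i hi p hp
      have hx : |(1 - (i:ℝ)/n) * p.1 + p.2| < β / 2 := habsβ p hp i hi
      have hLc : ContinuousAt (Lc β) ((1 - (i:ℝ)/n) * p.1 + p.2) :=
        (hasDerivAt_Lc hx).continuousAt
      have hxc : ContinuousAt (fun p : ℝ × ℝ => (1 - (i:ℝ)/n) * p.1 + p.2) p := by fun_prop
      exact (ContinuousAt.comp (x := p) hLc hxc).continuousWithinAt
    · fun_prop
  obtain ⟨p, hpK, hmin⟩ := hKc.exists_isMinOn hKne hFcont
  have hF00 : F (0, 0) = 0 := by
    simp [hF, Lc_zero hβ]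
  have hFp0 : F p ≤ 0 := by
    calc F p ≤ F (0,0) := hmin h00K
      _ = 0 := hF00
  -- boundary estimate
  have hbdry : ∀ p' ∈ K, (|p'.2| = ρ ∨ |t₁ * p'.1 + p'.2| = ρ) → 1 ≤ F p' := by
    intro p' hp' hor
    have hsum_lower : ∀ j ∈ Finset.Icc 1 n, |(1 - (j:ℝ)/n) * p'.1 + p'.2| = ρ →
        M + ((n:ℝ) - 1) * Cc β ≤ ∑ i ∈ Finset.Icc 1 n, Lc β ((1 - (i:ℝ)/n) * p'.1 + p'.2) := by
      intro j hj hLj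
      have hLcj : Lc β ((1 - (j:ℝ)/n) * p'.1 + p'.2) = Lc β ρ := by
        rw [← hLj, Lc_abs]
      rw [← Finset.add_sum_erase _ _ hj, hLcj]
      have hcard : ((Finset.Icc 1 n).erase j).card = n - 1 := by
        rw [Finset.card_erase_of_mem hj, Nat.card_Icc]
        omega
      have hlow : ∀ i ∈ (Finset.Icc 1 n).erase j, Cc β ≤ Lc β ((1 - (i:ℝ)/n) * p'.1 + p'.2) := by
        intro i hi
        exact Lc_lower (habsβ p' hp' i (Finset.mem_of_mem_erase hi))
      have hsum := Finset.card_nsmul_le_sum _ _ _ hlow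
      rw [hcard, nsmul_eq_mul] at hsum
      have hcast : ((n - 1 : ℕ) : ℝ) = (n:ℝ) - 1 := by
        have h1n : 1 ≤ n := by omega
        push_cast [h1n]
        ring
      rw [hcast] at hsum
      linarith
    have hkey : M + ((n:ℝ) - 1) * Cc β
        ≤ ∑ i ∈ Finset.Icc 1 n, Lc β ((1 - (i:ℝ)/n) * p'.1 + p'.2) := by
      rcases hor with h | h
      · refine hsum_lower n (Finset.mem_Icc.mpr ⟨by omega, le_refl n⟩) ?_
        rw [show (1 - (n:ℝ)/n) * p'.1 + p'.2 = p'.2 by rw [div_self hnpos.ne']; ring]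
        exact h
      · refine hsum_lower 1 (Finset.mem_Icc.mpr ⟨le_refl 1, by omega⟩) ?_
        rw [show (1 - (1:ℕ)/(n:ℝ)) * p'.1 + p'.2 = t₁ * p'.1 + p'.2 by push_cast; rw [ht₁]]
        exact h
    have hlin : n * q * p'.1 ≤ 2 * n * q₂ * β := by
      have h1 : |p'.1| ≤ 4 * ρ := hp1bound p' hp'
      have h2 : |p'.1| ≤ 2 * β := by linarith
      have h3 : n * q * p'.1 ≤ n * q * |p'.1| := by
        have := le_abs_self p'.1
        have hnq : 0 ≤ (n:ℝ) * q := by positivity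
        nlinarith
      have ha := mul_le_mul_of_nonneg_left h2 (show (0:ℝ) ≤ (n:ℝ) * q by positivity)
      have hb := mul_le_mul_of_nonneg_right
        (mul_le_mul_of_nonneg_left hq2 hnpos.le) (show (0:ℝ) ≤ 2 * β by linarith)
      nlinarith
    have hCc : ((n:ℝ) - 1) * Cc β ≥ -(n * |Cc β|) := by
      have h1 : -|Cc β| ≤ Cc β := neg_abs_le _
      have h2 : Cc β ≤ |Cc β| := le_abs_self _
      have h3 : (1:ℝ) ≤ (n:ℝ) := by linarith [show (2:ℝ) ≤ n from by exact_mod_cast hn]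
      nlinarith [abs_nonneg (Cc β)]
    have hFp' : F p' = (∑ i ∈ Finset.Icc 1 n, Lc β ((1 - (i:ℝ)/n) * p'.1 + p'.2))
        - n * q * p'.1 := rfl
    rw [hFp']
    linarith [hkey, hlin, hCc, hM]
  -- the minimizer is interior
  have hpU : |p.2| < ρ ∧ |t₁ * p.1 + p.2| < ρ := by
    by_contra hcon
    have : |p.2| = ρ ∨ |t₁ * p.1 + p.2| = ρ := by
      rcases hpK with ⟨h1, h2⟩
      rcases not_and_or.mp hcon with h | h
      · left; exact le_antisymm h1 (not_lt.mp h)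
      · right; exact le_antisymm h2 (not_lt.mp h)
    linarith [hbdry p hpK this]
  have hUopen : IsOpen {p' : ℝ × ℝ | |p'.2| < ρ ∧ |t₁ * p'.1 + p'.2| < ρ} := by
    apply IsOpen.inter
    · exact isOpen_lt (continuous_abs.comp continuous_snd) continuous_const
    · exact isOpen_lt (continuous_abs.comp
        ((continuous_const.mul continuous_fst).add continuous_snd)) continuous_const
  have hUK : {p' : ℝ × ℝ | |p'.2| < ρ ∧ |t₁ * p'.1 + p'.2| < ρ} ⊆ K := by
    intro p' hp'; exact ⟨hp'.1.le, hp'.2.le⟩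
  have hKnhds : K ∈ nhds p :=
    Filter.mem_of_superset (hUopen.mem_nhds hpU) hUK
  have hloc : IsLocalMin F p := hmin.isLocalMin hKnhds
  -- partial derivatives
  have habsi : ∀ i ∈ Finset.Icc 1 n, |(1 - (i:ℝ)/n) * p.1 + p.2| < β / 2 :=
    fun i hi => habsβ p hpK i hi
  have hd0 : HasDerivAt (fun s : ℝ => F (p.1 + s, p.2))
      ((∑ i ∈ Finset.Icc 1 n, (1 - (i:ℝ)/n) * phi β ((1 - (i:ℝ)/n) * p.1 + p.2)) - n * q) 0 := by
    have hterm : ∀ i ∈ Finset.Icc 1 n,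
        HasDerivAt (fun s : ℝ => Lc β ((1 - (i:ℝ)/n) * (p.1 + s) + p.2))
          ((1 - (i:ℝ)/n) * phi β ((1 - (i:ℝ)/n) * p.1 + p.2)) 0 := by
      intro i hi
      have hinner : HasDerivAt (fun s : ℝ => (1 - (i:ℝ)/n) * (p.1 + s) + p.2)
          (1 - (i:ℝ)/n) 0 := by
        simpa using (((hasDerivAt_id (0:ℝ)).const_add p.1).const_mul (1 - (i:ℝ)/n)).add_const p.2
      have houter : HasDerivAt (Lc β) (phi β ((1 - (i:ℝ)/n) * p.1 + p.2))
          ((1 - (i:ℝ)/n) * (p.1 + 0) + p.2) := by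
        rw [add_zero]
        exact hasDerivAt_Lc (habsi i hi)
      have := houter.comp 0 hinner
      simpa [Function.comp_def, mul_comm] using this
    have hsum := HasDerivAt.fun_sum hterm
    have hlin : HasDerivAt (fun s : ℝ => (n:ℝ) * q * (p.1 + s)) ((n:ℝ) * q) 0 := by
      simpa using ((hasDerivAt_id (0:ℝ)).const_add p.1).const_mul ((n:ℝ) * q)
    exact hsum.fun_sub hlin
  have hd1 : HasDerivAt (fun s : ℝ => F (p.1, p.2 + s))
      (∑ i ∈ Finset.Icc 1 n, phi β ((1 - (i:ℝ)/n) * p.1 + p.2)) 0 := by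
    have hterm : ∀ i ∈ Finset.Icc 1 n,
        HasDerivAt (fun s : ℝ => Lc β ((1 - (i:ℝ)/n) * p.1 + (p.2 + s)))
          (phi β ((1 - (i:ℝ)/n) * p.1 + p.2)) 0 := by
      intro i hi
      have hinner : HasDerivAt (fun s : ℝ => (1 - (i:ℝ)/n) * p.1 + (p.2 + s)) 1 0 := by
        simpa using ((hasDerivAt_id (0:ℝ)).const_add p.2).const_add ((1 - (i:ℝ)/n) * p.1)
      have houter : HasDerivAt (Lc β) (phi β ((1 - (i:ℝ)/n) * p.1 + p.2))
          ((1 - (i:ℝ)/n) * p.1 + (p.2 + 0)) := by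
        rw [add_zero]
        exact hasDerivAt_Lc (habsi i hi)
      have := houter.comp 0 hinner
      simpa [Function.comp_def] using this
    have hsum := HasDerivAt.fun_sum hterm
    have : HasDerivAt (fun s : ℝ => F (p.1, p.2 + s))
        ((∑ i ∈ Finset.Icc 1 n, phi β ((1 - (i:ℝ)/n) * p.1 + p.2)) - 0) 0 := by
      exact hsum.fun_sub (hasDerivAt_const 0 ((n:ℝ) * q * p.1))
    simpa using this
  -- local min along coordinate lines
  have hc0 : IsLocalMin (fun s : ℝ => F (p.1 + s, p.2)) 0 := by
    have hcont : Filter.Tendsto (fun s : ℝ => ((p.1 + s, p.2) : ℝ × ℝ)) (nhds 0) (nhds p) := by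
      have h := Continuous.tendsto
        (show Continuous fun s : ℝ => ((p.1 + s, p.2) : ℝ × ℝ) by continuity) 0
      simpa using h
    have := hcont.eventually hloc
    refine this.mono fun s hs => ?_
    simpa using hs
  have hc1 : IsLocalMin (fun s : ℝ => F (p.1, p.2 + s)) 0 := by
    have hcont : Filter.Tendsto (fun s : ℝ => ((p.1, p.2 + s) : ℝ × ℝ)) (nhds 0) (nhds p) := by
      have h := Continuous.tendsto
        (show Continuous fun s : ℝ => ((p.1, p.2 + s) : ℝ × ℝ) by continuity) 0
      simpa using h
    have := hcont.eventually hloc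
    refine this.mono fun s hs => ?_
    simpa using hs
  have he0 : (∑ i ∈ Finset.Icc 1 n, (1 - (i:ℝ)/n) * phi β ((1 - (i:ℝ)/n) * p.1 + p.2))
      - n * q = 0 := by
    rw [← hd0.deriv]
    exact hc0.deriv_eq_zero
  have he1 : (∑ i ∈ Finset.Icc 1 n, phi β ((1 - (i:ℝ)/n) * p.1 + p.2)) = 0 := by
    rw [← hd1.deriv]
    exact hc1.deriv_eq_zero
  refine ⟨p, ⟨lt_of_le_of_lt hpK.1 hρβ, lt_of_le_of_lt hpK.2 hρβ⟩, by linarith, he1⟩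


/-- Existence and uniqueness of the discrete tilt `H_n^q`. -/
theorem discrete_tilt_exists_unique (β : ℝ) (hβ : 0 < β)
    (q₁ q₂ : ℝ) (hq₁ : 0 < q₁) (hq : q₁ ≤ q₂) :
    ∃ n₀ : ℕ, ∀ n : ℕ, n₀ ≤ n → ∀ q ∈ Set.Icc q₁ q₂,
      ∃! p : ℝ × ℝ, p ∈ Dn β n ∧
        (1 / (n : ℝ)) * ∑ i ∈ Finset.Icc 1 n,
          (1 - (i : ℝ) / n) * deriv (Lmgf β) ((1 - (i : ℝ) / n) * p.1 + p.2) = q ∧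
        (1 / (n : ℝ)) * ∑ i ∈ Finset.Icc 1 n,
          deriv (Lmgf β) ((1 - (i : ℝ) / n) * p.1 + p.2) = 0 := by
  refine ⟨2, fun n hn q hq => ?_⟩
  have hq0 : 0 < q := lt_of_lt_of_le hq₁ hq.1
  have hq2 : q ≤ q₂ := hq.2
  have hnpos : (0:ℝ) < n := by positivity
  obtain ⟨p, hpD, he0, he1⟩ := exists_sol hβ hn hq0 hq2
  have hpabs : ∀ i ∈ Finset.Icc 1 n, |(1 - (i:ℝ)/n) * p.1 + p.2| < β / 2 :=
    fun i hi => abslt hn hpD.1 hpD.2 hi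
  have hrw : ∀ p' : ℝ × ℝ, (∀ i ∈ Finset.Icc 1 n, |(1 - (i:ℝ)/n) * p'.1 + p'.2| < β / 2) →
      (∑ i ∈ Finset.Icc 1 n,
          (1 - (i:ℝ)/n) * deriv (Lmgf β) ((1 - (i:ℝ)/n) * p'.1 + p'.2)
        = ∑ i ∈ Finset.Icc 1 n, (1 - (i:ℝ)/n) * phi β ((1 - (i:ℝ)/n) * p'.1 + p'.2))
      ∧ (∑ i ∈ Finset.Icc 1 n, deriv (Lmgf β) ((1 - (i:ℝ)/n) * p'.1 + p'.2)
        = ∑ i ∈ Finset.Icc 1 n, phi β ((1 - (i:ℝ)/n) * p'.1 + p'.2)) := by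
    intro p' h
    constructor
    · exact Finset.sum_congr rfl fun i hi => by rw [deriv_Lmgf hβ (h i hi)]
    · exact Finset.sum_congr rfl fun i hi => by rw [deriv_Lmgf hβ (h i hi)]
  refine ⟨p, ⟨hpD, ?_, ?_⟩, ?_⟩
  · rw [(hrw p hpabs).1, he0]
    field_simp
  · rw [(hrw p hpabs).2, he1, mul_zero]
  · rintro p' ⟨hp'D, h0', h1'⟩
    have hp'D' : |p'.2| < β / 2 ∧ |(1 - 1 / (n:ℝ)) * p'.1 + p'.2| < β / 2 := hp'D
    have hp'abs : ∀ i ∈ Finset.Icc 1 n, |(1 - (i:ℝ)/n) * p'.1 + p'.2| < β / 2 :=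
      fun i hi => abslt hn hp'D'.1 hp'D'.2 hi
    rw [(hrw p' hp'abs).1] at h0'
    rw [(hrw p' hp'abs).2] at h1'
    have e0' : ∑ i ∈ Finset.Icc 1 n, (1 - (i:ℝ)/n) * phi β ((1 - (i:ℝ)/n) * p'.1 + p'.2)
        = (n:ℝ) * q := by
      have hh : (n:ℝ) * (1 / (n:ℝ) * ∑ i ∈ Finset.Icc 1 n,
          (1 - (i:ℝ)/n) * phi β ((1 - (i:ℝ)/n) * p'.1 + p'.2)) = (n:ℝ) * q := by rw [h0']
      rwa [← mul_assoc, mul_one_div_cancel hnpos.ne', one_mul] at hh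
    have e1' : ∑ i ∈ Finset.Icc 1 n, phi β ((1 - (i:ℝ)/n) * p'.1 + p'.2) = 0 := by
      have hh : (n:ℝ) * (1 / (n:ℝ) * ∑ i ∈ Finset.Icc 1 n,
          phi β ((1 - (i:ℝ)/n) * p'.1 + p'.2)) = (n:ℝ) * 0 := by rw [h1', mul_zero]
      rwa [← mul_assoc, mul_one_div_cancel hnpos.ne', one_mul, mul_zero] at hh
    exact uniq_sol hn hp'abs hpabs (by rw [e0', he0]) (by rw [e1', he1])
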